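/- arXiv:2304.12754 — 4 statements merged into one kernel-verified Lean document; each statement's English description precedes it below -/
import Mathlib

section
/- Suppose 0 < 2a < 1 and ρ > 0. Then for every x ∈ ℝ there exists a unique t > 0 with F(t,x) = 0, and a unique s > 0 with G(s,x) = 1. -/
/-!
Write `c = eˣ/ρ > 0`. In `t`, `F` is concave and `G` is convex, and a concave function on
`[0, ∞)` lying strictly above a level `y` at `0` meets `y` at most once on `(0, ∞)`: every point
strictly between `0` and a solution lies above the chord, hence strictly above `y`.
Existence is the intermediate value theorem, using `F(0) = a > 0 > F(a + c)`,
`G(0) = a < 1` and `G(s) → ∞`, since `c e^{ρs}` outgrows `s`.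
-/

open Real Set Filter

theorem convexOn_exp_mul (b : ℝ) : ConvexOn ℝ univ fun x => exp (b * x) :=
  convexOn_exp.comp_linearMap (LinearMap.mul ℝ ℝ b)

theorem concaveOn_add_mul_one_sub_exp_mul_sub (a b : ℝ) {c : ℝ} (hc : 0 ≤ c) :
    ConcaveOn ℝ univ fun t => a + c * (1 - exp (b * t)) - t := by
  refine ((((convexOn_exp_mul b).smul hc).neg.add_const (a + c)).sub
    (convexOn_id convex_univ)).congr fun t _ => ?_
  simp only [Pi.sub_apply, Pi.add_apply, Pi.neg_apply, id, smul_eq_mul]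
  ring

theorem convexOn_add_mul_exp_mul_sub_one_sub (a b : ℝ) {c : ℝ} (hc : 0 ≤ c) :
    ConvexOn ℝ univ fun s => a + c * (exp (b * s) - 1) - s := by
  refine ((((convexOn_exp_mul b).smul hc).add_const (a - c)).sub
    (concaveOn_id convex_univ)).congr fun s _ => ?_
  simp only [Pi.sub_apply, Pi.add_apply, id, smul_eq_mul]
  ring

theorem tendsto_const_mul_exp_mul_sub_atTop {b c : ℝ} (hb : 0 < b) (hc : 0 < c) :
    Tendsto (fun x => c * exp (b * x) - x) atTop atTop := by
  have hquot : Tendsto (fun x => c * (exp (b * x) / x) - 1) atTop atTop := by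
    have := tendsto_exp_mul_div_rpow_atTop 1 b hb
    simp only [rpow_one] at this
    exact tendsto_atTop_add_const_right _ _ (this.const_mul_atTop hc)
  refine (tendsto_id.atTop_mul_atTop₀ hquot).congr' ?_
  filter_upwards [eventually_gt_atTop 0] with x hx
  simp only [id]
  field_simp

namespace ConcaveOn

variable {φ : ℝ → ℝ} {y : ℝ}

theorem lt_apply_of_lt_apply_zero (hφ : ConcaveOn ℝ (Ici 0) φ) (h0 : y < φ 0) {s t : ℝ}
    (hs : 0 ≤ s) (hst : s < t) (ht : y ≤ φ t) : y < φ s := by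
  have ht0 : 0 < t := hs.trans_lt hst
  have hcoef : 0 < 1 - s / t := by rw [sub_pos, div_lt_one ht0]; exact hst
  have hst' : 0 ≤ s / t := div_nonneg hs ht0.le
  have hchord := hφ.2 self_mem_Ici ht0.le hcoef.le hst' (by ring)
  simp only [smul_eq_mul, mul_zero, zero_add, div_mul_cancel₀ s ht0.ne'] at hchord
  calc y = (1 - s / t) * y + s / t * y := by ring
    _ < (1 - s / t) * φ 0 + s / t * φ t :=
      add_lt_add_of_lt_of_le (mul_lt_mul_of_pos_left h0 hcoef) (mul_le_mul_of_nonneg_left ht hst')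
    _ ≤ φ s := hchord

theorem existsUnique_pos_eq (hφ : ConcaveOn ℝ (Ici 0) φ) (hcont : ContinuousOn φ (Ici 0))
    (h0 : y < φ 0) {T : ℝ} (hT : 0 ≤ T) (hφT : φ T < y) : ∃! t, 0 < t ∧ φ t = y := by
  obtain ⟨t, ⟨ht0, -⟩, hty⟩ :=
    intermediate_value_Ioo' hT (hcont.mono Icc_subset_Ici_self) ⟨hφT, h0⟩
  refine ⟨t, ⟨ht0, hty⟩, fun s ⟨hs0, hsy⟩ => ?_⟩
  rcases lt_trichotomy s t with hst | rfl | hts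
  · exact absurd hsy (hφ.lt_apply_of_lt_apply_zero h0 hs0.le hst hty.ge).ne'
  · rfl
  · exact absurd hty (hφ.lt_apply_of_lt_apply_zero h0 ht0.le hts hsy.ge).ne'

end ConcaveOn

theorem ConvexOn.existsUnique_pos_eq {φ : ℝ → ℝ} {y : ℝ} (hφ : ConvexOn ℝ (Ici 0) φ)
    (hcont : ContinuousOn φ (Ici 0)) (h0 : φ 0 < y) {T : ℝ} (hT : 0 ≤ T) (hφT : y < φ T) :
    ∃! t, 0 < t ∧ φ t = y := by
  simpa only [Pi.neg_apply, neg_inj] using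
    hφ.neg.existsUnique_pos_eq hcont.neg (neg_lt_neg h0) hT (neg_lt_neg hφT)

theorem stmt_4 (ρ a : ℝ) (hρ : 0 < ρ) (ha : 0 < 2 * a) (ha' : 2 * a < 1) (x : ℝ) :
    (∃! t : ℝ, 0 < t ∧ a + (Real.exp x / ρ) * (1 - Real.exp (-ρ * t)) - t = 0) ∧
    (∃! s : ℝ, 0 < s ∧ a + (Real.exp x / ρ) * (Real.exp (ρ * s) - 1) - s = 1) := by
  set c := Real.exp x / ρ
  have hc : 0 < c := by positivity
  have hF := (concaveOn_add_mul_one_sub_exp_mul_sub a (-ρ) hc.le).subset (subset_univ _)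
    (convex_Ici 0)
  have hG := (convexOn_add_mul_exp_mul_sub_one_sub a ρ hc.le).subset (subset_univ _)
    (convex_Ici 0)
  obtain ⟨T, hGT, hT⟩ :=
    (((tendsto_const_mul_exp_mul_sub_atTop hρ hc).eventually_gt_atTop (1 - a + c)).and
      (eventually_ge_atTop 0)).exists
  constructor
  · refine hF.existsUnique_pos_eq (by fun_prop) ?_ (T := a + c) (by linarith) ?_
    · simp only [mul_zero, exp_zero, sub_self, add_zero, sub_zero]
      linarith
    · nlinarith [exp_pos (-ρ * (a + c))]
  · refine hG.existsUnique_pos_eq (by fun_prop) ?_ hT (by linarith)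
    simp only [mul_zero, exp_zero, sub_self, add_zero, sub_zero]
    linarith
end

section
/- Let 0 < 2a < 1 and ρ > 0. The function f(t) = ρ(t - a)/(1 - e^{-ρt}) satisfies f'(t) > 0 for all t > 0, i.e., f is strictly increasing on (0, ∞). -/
/-! The numerator of `f'(t)` factors as `ρ e^{-ρt} (e^{ρt} - 1 - ρt + ρa)`, which is positive
because `e^x > 1 + x` for `x ≠ 0` and `ρa ≥ 0`. -/

open Real

variable {ρ a t : ℝ}

lemma one_sub_exp_neg_mul_ne_zero (h : ρ * t ≠ 0) : 1 - exp (-ρ * t) ≠ 0 := by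
  rw [sub_ne_zero, ne_comm, Ne, exp_eq_one_iff, neg_mul]
  exact neg_ne_zero.mpr h

lemma hasDerivAt_mul_sub_div_one_sub_exp (a : ℝ) (h : ρ * t ≠ 0) :
    HasDerivAt (fun t => ρ * (t - a) / (1 - exp (-ρ * t)))
      (ρ * exp (-ρ * t) * (exp (ρ * t) - 1 - ρ * t + ρ * a) / (1 - exp (-ρ * t)) ^ 2) t := by
  have hnum : HasDerivAt (fun t => ρ * (t - a)) ρ t := by
    simpa using ((hasDerivAt_id t).sub_const a).const_mul ρ
  have hden : HasDerivAt (fun t => 1 - exp (-ρ * t)) (ρ * exp (-ρ * t)) t := by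
    simpa [mul_comm] using (((hasDerivAt_id t).const_mul (-ρ)).exp).const_sub 1
  refine (hnum.div hden (one_sub_exp_neg_mul_ne_zero h)).congr_deriv ?_
  have hinv : exp (ρ * t) * exp (-ρ * t) = 1 := by rw [← exp_add]; ring_nf; exact exp_zero
  congr 1
  linear_combination -ρ * hinv

lemma deriv_mul_sub_div_one_sub_exp_pos (hρ : 0 < ρ) (ha : 0 ≤ a) (ht : t ≠ 0) :
    0 < deriv (fun t => ρ * (t - a) / (1 - exp (-ρ * t))) t := by
  have hρt : ρ * t ≠ 0 := mul_ne_zero hρ.ne' ht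
  rw [(hasDerivAt_mul_sub_div_one_sub_exp a hρt).deriv]
  have hexp : ρ * t + 1 < exp (ρ * t) := add_one_lt_exp hρt
  have hden : 0 < (1 - exp (-ρ * t)) ^ 2 := sq_pos_of_ne_zero (one_sub_exp_neg_mul_ne_zero hρt)
  have hfactor : 0 < exp (ρ * t) - 1 - ρ * t + ρ * a := by linarith [mul_nonneg hρ.le ha]
  positivity

theorem stmt_9_general (ρ a : ℝ) (hρ : 0 < ρ) (ha : 0 < 2 * a) :
    (∀ t : ℝ, 0 < t → 0 < deriv (fun t : ℝ => ρ * (t - a) / (1 - Real.exp (-ρ * t))) t) ∧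
    StrictMonoOn (fun t : ℝ => ρ * (t - a) / (1 - Real.exp (-ρ * t))) (Set.Ioi 0) := by
  have hderiv (t : ℝ) (ht : 0 < t) :
      0 < deriv (fun t : ℝ => ρ * (t - a) / (1 - Real.exp (-ρ * t))) t :=
    deriv_mul_sub_div_one_sub_exp_pos hρ (by linarith) ht.ne'
  refine ⟨hderiv, strictMonoOn_of_deriv_pos (convex_Ioi 0) ?_ ?_⟩
  · intro t ht
    exact (hasDerivAt_mul_sub_div_one_sub_exp a (mul_pos hρ ht).ne').continuousAt.continuousWithinAt
  · rw [interior_Ioi]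
    exact hderiv

theorem stmt_9 (ρ a : ℝ) (hρ : 0 < ρ) (ha : 0 < 2 * a) (ha' : 2 * a < 1) :
    (∀ t : ℝ, 0 < t → 0 < deriv (fun t : ℝ => ρ * (t - a) / (1 - Real.exp (-ρ * t))) t) ∧
    StrictMonoOn (fun t : ℝ => ρ * (t - a) / (1 - Real.exp (-ρ * t))) (Set.Ioi 0) :=
  stmt_9_general ρ a hρ ha
end

section
/- Let 0 < 2a < 1 and ρ > 0. The function g(t) = ρ(1 + t - a)/(e^{ρt} - 1) satisfies g'(t) < 0 for all t > 0, i.e., g is strictly decreasing on (0, ∞). -/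
open Real Set

theorem Real.exp_sub_one_lt_mul_exp {x : ℝ} (hx : x ≠ 0) : exp x - 1 < x * exp x := by
  have hmul := mul_lt_mul_of_pos_right (add_one_lt_exp (neg_ne_zero.mpr hx)) (exp_pos x)
  rw [← exp_add, neg_add_cancel, exp_zero] at hmul
  linarith

section AffineOverExpSubOne

variable {ρ p q t : ℝ}

theorem hasDerivAt_affine_div_exp_sub_one (ht : exp (ρ * t) - 1 ≠ 0) :
    HasDerivAt (fun t => (p * t + q) / (exp (ρ * t) - 1))
      ((p * (exp (ρ * t) - 1) - (p * t + q) * (ρ * exp (ρ * t))) / (exp (ρ * t) - 1) ^ 2) t := by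
  have hnum : HasDerivAt (fun t => p * t + q) p t := by
    simpa using ((hasDerivAt_id t).const_mul p).add_const q
  have hden : HasDerivAt (fun t => exp (ρ * t) - 1) (ρ * exp (ρ * t)) t := by
    simpa [mul_comm] using (((hasDerivAt_id t).const_mul ρ).exp).sub_const 1
  exact hnum.div hden ht

theorem exp_mul_sub_one_pos (hρ : 0 < ρ) (ht : 0 < t) : 0 < exp (ρ * t) - 1 :=
  sub_pos.mpr (one_lt_exp_iff.mpr (mul_pos hρ ht))

theorem deriv_affine_div_exp_sub_one_neg (hρ : 0 < ρ) (hp : 0 < p) (hq : 0 ≤ q) (ht : 0 < t) :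
    deriv (fun t => (p * t + q) / (exp (ρ * t) - 1)) t < 0 := by
  have hpos := exp_mul_sub_one_pos hρ ht
  rw [(hasDerivAt_affine_div_exp_sub_one hpos.ne').deriv]
  refine div_neg_of_neg_of_pos ?_ (pow_pos hpos 2)
  -- With E = exp (ρ t): p (E - 1) < p ρ t E ≤ (p t + q) ρ E.
  have hkey := exp_sub_one_lt_mul_exp (mul_pos hρ ht).ne'
  have hqE : 0 ≤ q * (ρ * exp (ρ * t)) := by positivity
  nlinarith [mul_lt_mul_of_pos_left hkey hp]

theorem strictAntiOn_affine_div_exp_sub_one (hρ : 0 < ρ) (hp : 0 < p) (hq : 0 ≤ q) :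
    StrictAntiOn (fun t => (p * t + q) / (exp (ρ * t) - 1)) (Ioi 0) := by
  refine strictAntiOn_of_deriv_neg (convex_Ioi 0) (fun t ht => ?_) (fun t ht => ?_)
  · exact (hasDerivAt_affine_div_exp_sub_one
      (exp_mul_sub_one_pos hρ ht).ne').continuousAt.continuousWithinAt
  · rw [interior_Ioi] at ht
    exact deriv_affine_div_exp_sub_one_neg hρ hp hq ht

end AffineOverExpSubOne

theorem stmt_10_general (ρ a : ℝ) (hρ : 0 < ρ) (ha' : 2 * a < 1) :
    (∀ t : ℝ, 0 < t → deriv (fun t : ℝ => ρ * (1 + t - a) / (Real.exp (ρ * t) - 1)) t < 0) ∧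
    StrictAntiOn (fun t : ℝ => ρ * (1 + t - a) / (Real.exp (ρ * t) - 1)) (Set.Ioi 0) := by
  have hg : (fun t : ℝ => ρ * (1 + t - a) / (exp (ρ * t) - 1)) =
      fun t => (ρ * t + ρ * (1 - a)) / (exp (ρ * t) - 1) := by
    funext t; ring
  have hq : 0 ≤ ρ * (1 - a) := mul_nonneg hρ.le (by linarith)
  rw [hg]
  exact ⟨fun t ht => deriv_affine_div_exp_sub_one_neg hρ hρ hq ht,
    strictAntiOn_affine_div_exp_sub_one hρ hρ hq⟩

theorem stmt_10 (ρ a : ℝ) (hρ : 0 < ρ) (ha : 0 < 2 * a) (ha' : 2 * a < 1) :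
    (∀ t : ℝ, 0 < t → deriv (fun t : ℝ => ρ * (1 + t - a) / (Real.exp (ρ * t) - 1)) t < 0) ∧
    StrictAntiOn (fun t : ℝ => ρ * (1 + t - a) / (Real.exp (ρ * t) - 1)) (Set.Ioi 0) :=
  stmt_10_general ρ a hρ ha'
end

section
/- Let 0 < 2a < 1 and ρ > 0, with a > 0. The function f(t) = ρ(t - a)/(1 - e^{-ρt}) restricted to (a, ∞) is a strictly increasing bijection from (a, ∞) onto (0, ∞). -/
/-!
The quotient rule gives `f' = ρ e^{-ρt} (e^{ρt} - 1 - ρ(t - a)) / (1 - e^{-ρt})²`, which is positive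
for `t > a ≥ 0` because `e^x > 1 + x` for `x ≠ 0`. Since `0 < 1 - e^{-ρt} < 1`, we have
`f t > ρ(t - a)`, so `f` is unbounded, while `f a = 0` and `f` is continuous on `[a, ∞)` when
`a > 0`; the intermediate value theorem then gives surjectivity onto `(0, ∞)`.
-/

open Real Set

namespace ExpRatio

noncomputable def f (ρ a t : ℝ) : ℝ := ρ * (t - a) / (1 - exp (-ρ * t))

variable {ρ a t : ℝ}

lemma one_sub_exp_neg_mul_pos (hρ : 0 < ρ) (ht : 0 < t) : 0 < 1 - exp (-ρ * t) := by
  have : exp (-ρ * t) < 1 := exp_lt_one_iff.mpr (by nlinarith)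
  linarith

lemma hasDerivAt_f (h : 1 - exp (-ρ * t) ≠ 0) :
    HasDerivAt (f ρ a)
      ((ρ * (1 - exp (-ρ * t)) - ρ * (t - a) * (ρ * exp (-ρ * t))) / (1 - exp (-ρ * t)) ^ 2) t := by
  have hnum : HasDerivAt (fun t => ρ * (t - a)) ρ t := by
    simpa using ((hasDerivAt_id t).sub_const a).const_mul ρ
  have hexp : HasDerivAt (fun t => exp (-ρ * t)) (exp (-ρ * t) * -ρ) t := by
    simpa using ((hasDerivAt_id t).const_mul (-ρ)).exp
  have hden : HasDerivAt (fun t => 1 - exp (-ρ * t)) (ρ * exp (-ρ * t)) t :=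
    (hexp.const_sub 1).congr_deriv (by ring)
  exact hnum.div hden h

lemma continuousOn_f (hρ : 0 < ρ) : ContinuousOn (f ρ a) (Ioi 0) := fun _ ht =>
  (hasDerivAt_f (one_sub_exp_neg_mul_pos hρ ht).ne').continuousAt.continuousWithinAt

lemma deriv_f_pos (hρ : 0 < ρ) (ha : 0 ≤ a) (ht : a < t) :
    0 < (ρ * (1 - exp (-ρ * t)) - ρ * (t - a) * (ρ * exp (-ρ * t))) / (1 - exp (-ρ * t)) ^ 2 := by
  have ht0 : 0 < t := ha.trans_lt ht
  have hinv : exp (-ρ * t) * exp (ρ * t) = 1 := by rw [← exp_add]; simp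
  have hfactor : ρ * (1 - exp (-ρ * t)) - ρ * (t - a) * (ρ * exp (-ρ * t)) =
      ρ * exp (-ρ * t) * (exp (ρ * t) - (ρ * t + 1) + ρ * a) := by
    linear_combination (-ρ) * hinv
  have hgap : ρ * t + 1 < exp (ρ * t) := add_one_lt_exp (mul_pos hρ ht0).ne'
  rw [hfactor]
  have : 0 ≤ ρ * a := mul_nonneg hρ.le ha
  have := one_sub_exp_neg_mul_pos hρ ht0
  positivity

lemma strictMonoOn_f (hρ : 0 < ρ) (ha : 0 ≤ a) : StrictMonoOn (f ρ a) (Ioi a) := by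
  refine strictMonoOn_of_deriv_pos (convex_Ioi a)
    ((continuousOn_f hρ).mono (Ioi_subset_Ioi ha)) fun t ht => ?_
  rw [interior_Ioi] at ht
  rw [(hasDerivAt_f (one_sub_exp_neg_mul_pos hρ (ha.trans_lt ht)).ne').deriv]
  exact deriv_f_pos hρ ha ht

lemma f_self : f ρ a a = 0 := by simp [f]

lemma mul_sub_lt_f (hρ : 0 < ρ) (ha : 0 ≤ a) (ht : a < t) : ρ * (t - a) < f ρ a t := by
  have hden := one_sub_exp_neg_mul_pos hρ (ha.trans_lt ht)
  have : 1 - exp (-ρ * t) < 1 := by linarith [exp_pos (-ρ * t)]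
  rw [f, lt_div_iff₀ hden]
  nlinarith [mul_pos hρ (sub_pos.mpr ht)]

lemma mapsTo_f (hρ : 0 < ρ) (ha : 0 ≤ a) : MapsTo (f ρ a) (Ioi a) (Ioi 0) := fun _ ht =>
  (mul_pos hρ (sub_pos.mpr ht)).trans (mul_sub_lt_f hρ ha ht)

lemma surjOn_f (hρ : 0 < ρ) (ha : 0 < a) : SurjOn (f ρ a) (Ioi a) (Ioi 0) := by
  intro y (hy : 0 < y)
  set T := a + y / ρ
  have haT : a < T := lt_add_of_pos_right a (div_pos hy hρ)
  have hyT : y < f ρ a T := by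
    simpa [T, mul_div_cancel₀ y hρ.ne'] using mul_sub_lt_f hρ ha.le haT
  have hcont : ContinuousOn (f ρ a) (Icc a T) := (continuousOn_f hρ).mono fun _ hs => ha.trans_le hs.1
  obtain ⟨t, ht, hft⟩ := intermediate_value_Ioo haT.le hcont ⟨f_self.symm ▸ hy, hyT⟩
  exact ⟨t, ht.1, hft⟩

end ExpRatio

open ExpRatio in
theorem stmt_12_general (ρ a : ℝ) (hρ : 0 < ρ) (hapos : 0 < a) :
    StrictMonoOn (fun t : ℝ => ρ * (t - a) / (1 - Real.exp (-ρ * t))) (Set.Ioi a) ∧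
    Set.BijOn (fun t : ℝ => ρ * (t - a) / (1 - Real.exp (-ρ * t)))
      (Set.Ioi a) (Set.Ioi 0) :=
  ⟨strictMonoOn_f hρ hapos.le,
    mapsTo_f hρ hapos.le, (strictMonoOn_f hρ hapos.le).injOn, surjOn_f hρ hapos⟩

theorem stmt_12 (ρ a : ℝ) (hρ : 0 < ρ) (ha : 0 < 2 * a) (ha' : 2 * a < 1) (hapos : 0 < a) :
    StrictMonoOn (fun t : ℝ => ρ * (t - a) / (1 - Real.exp (-ρ * t))) (Set.Ioi a) ∧
    Set.BijOn (fun t : ℝ => ρ * (t - a) / (1 - Real.exp (-ρ * t)))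
      (Set.Ioi a) (Set.Ioi 0) :=
  stmt_12_general ρ a hρ hapos
end
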